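/- arXiv:2303.13125 — 3 statements merged into one kernel-verified Lean document; each statement's English description precedes it below -/
import Mathlib

section
/- Let f : ℝ → ℝ be nondecreasing and L_f-Lipschitz continuous with L_f > 0, and define Φ(r) = ∫₀^r f'(s)·s ds (where f' exists a.e. since f is Lipschitz; equivalently use Φ(r) = r·f(r) - ∫₀^r f(s) ds). Then for all a, b ∈ ℝ: b·(f(b) - f(a)) ≥ (Φ(b) - Φ(a)) + (f(b) - f(a))²/(2·L_f). -/
/-!
Unfolding `Φ`, the gap `b (f b - f a) - (Φ b - Φ a)` is exactly `∫_a^b (f s - f a) ds`. For `a ≤ b` and `D = f b - f a`, the Lipschitz bound forces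
`f s - f a ≥ D - L (b - s)` on the last stretch `[b - D/L, b]` of the interval, and monotonicity
makes the integrand nonnegative elsewhere, so the integral is at least the area `D² / (2L)` of
that triangle. The case `b < a` reduces to this one through the reflection `t ↦ -f (-t)`.
-/

open intervalIntegral
open MeasureTheory (volume ae_restrict_of_forall_mem)

lemma integral_ramp_eq (D L b : ℝ) (hL : L ≠ 0) :
    ∫ s in (b - D / L)..b, (D - L * (b - s)) = D ^ 2 / (2 * L) := by
  rw [integral_sub intervalIntegrable_const (by apply Continuous.intervalIntegrable; fun_prop),
    integral_const_mul, integral_comp_sub_left (fun x => x)]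
  simp only [integral_const, sub_sub_cancel, smul_eq_mul, sub_self, integral_id, ne_eq,
    OfNat.ofNat_ne_zero, not_false_eq_true, zero_pow, sub_zero]
  field_simp
  ring

section

variable {f : ℝ → ℝ} {L : ℝ}

lemma sq_sub_div_le_integral_sub_of_le (hf : Monotone f) (hL : 0 < L)
    (hlip : ∀ x y, x ≤ y → f y - f x ≤ L * (y - x)) {a b : ℝ} (hab : a ≤ b) :
    (f b - f a) ^ 2 / (2 * L) ≤ ∫ s in a..b, (f s - f a) := by
  set c := (f b - f a) / L
  have hc : 0 ≤ c := div_nonneg (sub_nonneg.2 (hf hab)) hL.le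
  have hcb : c ≤ b - a := (div_le_iff₀' hL).2 (hlip a b hab)
  have hint : ∀ u v, IntervalIntegrable (fun s => f s - f a) volume u v :=
    fun _ _ => hf.intervalIntegrable.sub intervalIntegrable_const
  calc (f b - f a) ^ 2 / (2 * L)
      = ∫ s in (b - c)..b, (f b - f a - L * (b - s)) := (integral_ramp_eq _ _ _ hL.ne').symm
    _ ≤ ∫ s in (b - c)..b, (f s - f a) := by
        refine integral_mono_on (by linarith)
          (by apply Continuous.intervalIntegrable; fun_prop) (hint _ _) fun s hs => ?_
        linarith [hlip s b hs.2]
    _ ≤ ∫ s in a..b, (f s - f a) := by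
        refine integral_mono_interval (by linarith) (by linarith) le_rfl ?_ (hint _ _)
        exact ae_restrict_of_forall_mem measurableSet_Ioc fun s hs => sub_nonneg.2 (hf hs.1.le)

lemma integral_reflect_sub_eq (a b : ℝ) :
    ∫ s in -a..-b, (-f (-s) - -f (- -a)) = ∫ s in a..b, (f s - f a) := by
  rw [integral_comp_neg (fun s => -f s - -f (- -a)), integral_symm]
  simp only [neg_neg, ← integral_neg, neg_sub]
  congr 1
  funext s
  ring

lemma sq_sub_div_le_integral_sub (hf : Monotone f) (hL : 0 < L)
    (hlip : ∀ x y, x ≤ y → f y - f x ≤ L * (y - x)) (a b : ℝ) :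
    (f b - f a) ^ 2 / (2 * L) ≤ ∫ s in a..b, (f s - f a) := by
  rcases le_total a b with hab | hba
  · exact sq_sub_div_le_integral_sub_of_le hf hL hlip hab
  · have hg : Monotone fun t => -f (-t) := fun x y hxy => neg_le_neg (hf (neg_le_neg hxy))
    have hglip : ∀ x y, x ≤ y → -f (-y) - -f (-x) ≤ L * (y - x) := fun x y hxy => by
      linarith [hlip (-y) (-x) (neg_le_neg hxy)]
    have := sq_sub_div_le_integral_sub_of_le hg hL hglip (neg_le_neg hba)
    rw [integral_reflect_sub_eq, neg_neg, neg_neg] at this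
    convert this using 2
    ring

lemma mul_sub_eq_add_integral_sub (hf : ∀ u v, IntervalIntegrable f volume u v) (a b : ℝ) :
    b * (f b - f a) = ((b * f b - ∫ s in (0:ℝ)..b, f s) - (a * f a - ∫ s in (0:ℝ)..a, f s))
      + ∫ s in a..b, (f s - f a) := by
  rw [integral_sub (hf a b) intervalIntegrable_const, integral_const, smul_eq_mul,
    ← integral_add_adjacent_intervals (hf 0 a) (hf a b)]
  ring

end

theorem stmt_0 (f : ℝ → ℝ) (Lf : ℝ) (hLf : 0 < Lf)
    (hmono : Monotone f)
    (hlip : ∀ x y : ℝ, |f x - f y| ≤ Lf * |x - y|)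
    (Φ : ℝ → ℝ)
    (hΦ : ∀ r : ℝ, Φ r = r * f r - ∫ s in (0:ℝ)..r, f s) :
    ∀ a b : ℝ, b * (f b - f a) ≥ (Φ b - Φ a) + (f b - f a) ^ 2 / (2 * Lf) := by
  intro a b
  have hlip' : ∀ x y, x ≤ y → f y - f x ≤ Lf * (y - x) := fun x y hxy =>
    (le_abs_self _).trans ((hlip y x).trans_eq (by rw [abs_of_nonneg (sub_nonneg.2 hxy)]))
  rw [hΦ, hΦ, mul_sub_eq_add_integral_sub (fun _ _ => hmono.intervalIntegrable) a b]
  linarith [sq_sub_div_le_integral_sub hmono hLf hlip' a b]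
end

section
/- Let f : ℝ → ℝ be nondecreasing and L-Lipschitz with L > 0. Then for all a, b ∈ ℝ: ∫_a^b (f(s) - f(a)) ds ≥ (f(b) - f(a))² / (2·L). -/
/-!
For `a ≤ b` put `d = f b - f a`. Since `f` is `L`-Lipschitz, `f s - f a ≥ d - L (b - s)` for
`s ≤ b`, and this ramp is nonnegative exactly on `[b - d / L, b]`, which lies inside `[a, b]`
because `d ≤ L (b - a)`. Monotonicity makes the integrand nonnegative on the rest of `[a, b]`,
so the integral dominates the area `d² / (2L)` of the triangle under the ramp. The case `b ≤ a`
is reduced to this one by the reflection `s ↦ -f (-s)`, which is again monotone and `L`-Lipschitz.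
-/

open intervalIntegral NNReal

theorem integral_sub_mul_sub_eq_sq_div {d L b : ℝ} (hL : L ≠ 0) :
    ∫ s in b - d / L..b, (d - L * (b - s)) = d ^ 2 / (2 * L) := by
  rw [integral_comp_sub_left (fun x => d - L * x), integral_sub intervalIntegrable_const
    (intervalIntegrable_id.const_mul L), integral_const, integral_const_mul, integral_id]
  simp only [sub_sub_cancel, sub_self, smul_eq_mul]
  field_simp
  ring

theorem integral_sub_comp_neg (f : ℝ → ℝ) (a b : ℝ) :
    ∫ t in -a..-b, (f a - f (-t)) = ∫ s in a..b, (f s - f a) := by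
  rw [integral_comp_neg (fun s => f a - f s), neg_neg, neg_neg, integral_symm, ← integral_neg]
  simp only [neg_sub]

section

variable {f : ℝ → ℝ} {K : ℝ≥0}

theorem sq_div_two_mul_le_integral_sub_of_le (hK : 0 < K) (hmono : Monotone f)
    (hf : LipschitzWith K f) {a b : ℝ} (hab : a ≤ b) :
    (f b - f a) ^ 2 / (2 * K) ≤ ∫ s in a..b, (f s - f a) := by
  have hK' : (0 : ℝ) < K := hK
  set d := f b - f a
  have hd : 0 ≤ d := sub_nonneg.2 (hmono hab)
  have hdK : d ≤ K * (b - a) := by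
    have := hf.le_add_mul b a
    rw [Real.dist_eq, abs_of_nonneg (sub_nonneg.2 hab)] at this
    linarith
  set c := b - d / K
  have hac : a ≤ c := by
    have : d / K ≤ b - a := (div_le_iff₀' hK').2 hdK
    linarith
  have hcb : c ≤ b := sub_le_self _ (div_nonneg hd K.2)
  have hint : ∀ p q, IntervalIntegrable (fun s => f s - f a) MeasureTheory.volume p q :=
    (hf.continuous.sub continuous_const).intervalIntegrable
  have hramp : ∀ s ∈ Set.Icc c b, d - K * (b - s) ≤ f s - f a := fun s hs => by
    have := hf.le_add_mul b s
    rw [Real.dist_eq, abs_of_nonneg (sub_nonneg.2 hs.2)] at this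
    linarith
  calc d ^ 2 / (2 * K) = ∫ s in c..b, (d - K * (b - s)) :=
        (integral_sub_mul_sub_eq_sq_div hK'.ne').symm
    _ ≤ ∫ s in c..b, (f s - f a) :=
      integral_mono_on hcb
        ((by fun_prop : Continuous fun s => d - K * (b - s)).intervalIntegrable _ _)
        (hint c b) hramp
    _ ≤ (∫ s in a..c, (f s - f a)) + ∫ s in c..b, (f s - f a) :=
      le_add_of_nonneg_left (integral_nonneg hac fun s hs => sub_nonneg.2 (hmono hs.1))
    _ = ∫ s in a..b, (f s - f a) := integral_add_adjacent_intervals (hint a c) (hint c b)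

theorem sq_div_two_mul_le_integral_sub_of_ge (hK : 0 < K) (hmono : Monotone f)
    (hf : LipschitzWith K f) {a b : ℝ} (hba : b ≤ a) :
    (f b - f a) ^ 2 / (2 * K) ≤ ∫ s in a..b, (f s - f a) := by
  have hg_mono : Monotone fun t => -f (-t) := fun x y h => neg_le_neg (hmono (neg_le_neg h))
  have hg : LipschitzWith K fun t => -f (-t) := by
    have := (hf.comp LipschitzWith.id.neg).neg
    rwa [mul_one] at this
  have := sq_div_two_mul_le_integral_sub_of_le hK hg_mono hg (neg_le_neg hba)
  simpa only [neg_neg, neg_sub_neg, integral_sub_comp_neg, sub_sq_comm (f a)] using this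

end

theorem stmt_1 (f : ℝ → ℝ) (L : ℝ) (hL : 0 < L)
    (hmono : Monotone f)
    (hlip : ∀ x y : ℝ, |f x - f y| ≤ L * |x - y|) :
    ∀ a b : ℝ, (∫ s in a..b, (f s - f a)) ≥ (f b - f a) ^ 2 / (2 * L) := by
  lift L to ℝ≥0 using hL.le
  have hf : LipschitzWith L f := LipschitzWith.of_dist_le_mul fun x y => by
    simpa only [Real.dist_eq] using hlip x y
  intro a b
  rcases le_total a b with hab | hba
  · exact sq_div_two_mul_le_integral_sub_of_le hL hmono hf hab
  · exact sq_div_two_mul_le_integral_sub_of_ge hL hmono hf hba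
end

section
/- Let I be a finite set, E a symmetric edge relation on I without loops, and v : I × I → ℝ antisymmetric with ∑_{j:(i,j)∈E} v(i,j) = 0 for each i. Let f : ℝ → ℝ be nondecreasing and L_f-Lipschitz with L_f > 0. Then for all w : I → ℝ: ∑_{i∈I} ∑_{j:(i,j)∈E} v(i,j)⁻ (f(w_i) − f(w_j)) w_i ≥ (1/(2L_f)) ∑_{i∈I} ∑_{j:(i,j)∈E} v(i,j)⁻ (f(w_i) − f(w_j))² ≥ 0. -/
/-!
The upwind term is bounded below edge by edge. With `Φ(r) = r f(r) - ∫₀ʳ f` one has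
`b (f b - f a) ≥ Φ b - Φ a + (f b - f a)² / (2 L)`: between `a` and `b` the graph of `f` stays
above the ramp of slope `L` ending at `(b, f b)`, which gives the area `(f b - f a)² / (2 L)` on
top of the rectangle `(b - a) f a`. Summed with the weights `v(i,j)⁻`, the potential differences
cancel: swapping `i` and `j` turns `v⁻` into `v⁺`, and `∑ⱼ (v⁻ - v⁺) = -∑ⱼ v = 0` at every node.
-/

open Finset intervalIntegral MeasureTheory

section MonotoneLipschitz

variable {f : ℝ → ℝ} {L : ℝ}

theorem integral_sub_mul_sub_left (c b L y : ℝ) :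
    ∫ s in c..b, (y - L * (b - s)) = (b - c) * y - L * (b - c) ^ 2 / 2 := by
  rw [intervalIntegral.integral_sub intervalIntegrable_const
      ((by fun_prop : Continuous fun s : ℝ => L * (b - s)).intervalIntegrable _ _),
    intervalIntegral.integral_const_mul, integral_comp_sub_left (fun s => s),
    intervalIntegral.integral_const, smul_eq_mul, sub_self, integral_id]
  ring

theorem le_integral_of_monotone_of_le (hL : 0 < L) (hmono : Monotone f)
    (hlip : ∀ x y, x ≤ y → f y - f x ≤ L * (y - x)) {a b : ℝ} (hab : a ≤ b) :
    (b - a) * f a + (f b - f a) ^ 2 / (2 * L) ≤ ∫ s in a..b, f s := by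
  have hint : ∀ u v, IntervalIntegrable f volume u v := fun _ _ => hmono.intervalIntegrable
  -- `f` can only reach `f b` from `f a` on an interval of length at least `δ`.
  set δ := (f b - f a) / L with hδ
  have hfb : f b = f a + δ * L := by rw [hδ, div_mul_cancel₀ _ hL.ne']; ring
  have hδ0 : 0 ≤ δ := div_nonneg (sub_nonneg.2 (hmono hab)) hL.le
  have hδb : δ ≤ b - a := (div_le_iff₀ hL).2 (by linarith [hlip a b hab])
  have hflat : (b - δ - a) * f a ≤ ∫ s in a..b - δ, f s := by
    simpa using integral_mono_on (by linarith : a ≤ b - δ) intervalIntegrable_const (hint _ _)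
      fun s hs => hmono hs.1
  have hramp : δ * f b - L * δ ^ 2 / 2 ≤ ∫ s in b - δ..b, f s := by
    have := integral_mono_on (by linarith : b - δ ≤ b)
      ((by fun_prop : Continuous fun s => f b - L * (b - s)).intervalIntegrable _ _) (hint _ _)
      fun s hs => (by linarith [hlip s b hs.2] : f b - L * (b - s) ≤ f s)
    rwa [integral_sub_mul_sub_left, sub_sub_cancel] at this
  have harea : (b - δ - a) * f a + (δ * f b - L * δ ^ 2 / 2)
      = (b - a) * f a + (f b - f a) ^ 2 / (2 * L) := by
    rw [hfb]; field_simp; ring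
  rw [← integral_add_adjacent_intervals (hint a (b - δ)) (hint (b - δ) b)]
  linarith

theorem le_integral_of_monotone (hL : 0 < L) (hmono : Monotone f)
    (hlip : ∀ x y, x ≤ y → f y - f x ≤ L * (y - x)) (a b : ℝ) :
    (b - a) * f a + (f b - f a) ^ 2 / (2 * L) ≤ ∫ s in a..b, f s := by
  rcases le_total a b with hab | hba
  · exact le_integral_of_monotone_of_le hL hmono hlip hab
  · -- `x ↦ -f (-x)` satisfies the same hypotheses and turns the case `b ≤ a` into this one.
    have h := le_integral_of_monotone_of_le (f := fun x => -f (-x)) hL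
      (fun x y hxy => neg_le_neg (hmono (neg_le_neg hxy)))
      (fun x y hxy => by linarith [hlip (-y) (-x) (neg_le_neg hxy)]) (neg_le_neg hba)
    have hsq : (-f b - -f a) ^ 2 = (f b - f a) ^ 2 := by ring
    simp only [neg_neg, intervalIntegral.integral_neg, integral_comp_neg, hsq] at h
    rw [integral_symm]
    linarith

noncomputable def potential (f : ℝ → ℝ) (r : ℝ) : ℝ :=
  r * f r - ∫ s in (0 : ℝ)..r, f s

theorem potential_sub_add_sq_div_le (hL : 0 < L) (hmono : Monotone f)
    (hlip : ∀ x y, x ≤ y → f y - f x ≤ L * (y - x)) (a b : ℝ) :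
    potential f b - potential f a + (f b - f a) ^ 2 / (2 * L) ≤ (f b - f a) * b := by
  have hsplit := integral_add_adjacent_intervals (hmono.intervalIntegrable (μ := volume) (a := 0))
    (hmono.intervalIntegrable (μ := volume) (a := a) (b := b))
  have := le_integral_of_monotone hL hmono hlip a b
  simp only [potential]
  linarith

end MonotoneLipschitz

section Graph

variable {I : Type*} [Fintype I] {E : I → I → Prop} [DecidableRel E]

theorem sum_sum_filter_comm_of_symm {M : Type*} [AddCommMonoid M]
    (hE : ∀ i j, E i j → E j i) (g : I → I → M) :
    ∑ i, ∑ j ∈ univ.filter (fun j => E i j), g i j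
      = ∑ i, ∑ j ∈ univ.filter (fun j => E i j), g j i := by
  simp only [sum_filter]
  rw [sum_comm]
  exact sum_congr rfl fun i _ => sum_congr rfl fun j _ =>
    if_congr ⟨hE j i, hE i j⟩ rfl rfl

theorem sum_negPart_mul_sub_eq_zero (hE : ∀ i j, E i j → E j i) {v : I → I → ℝ}
    (hanti : ∀ i j, v i j = -(v j i))
    (hdiv : ∀ i, ∑ j ∈ univ.filter (fun j => E i j), v i j = 0) (x : I → ℝ) :
    ∑ i, ∑ j ∈ univ.filter (fun j => E i j), (v i j)⁻ * (x i - x j) = 0 := by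
  have hout : ∑ i, ∑ j ∈ univ.filter (fun j => E i j), (v i j)⁻ * x j
      = ∑ i, ∑ j ∈ univ.filter (fun j => E i j), (v i j)⁺ * x i := by
    rw [sum_sum_filter_comm_of_symm hE]
    exact sum_congr rfl fun i _ => sum_congr rfl fun j _ => by rw [hanti j i, negPart_neg]
  have hin : ∑ i, ∑ j ∈ univ.filter (fun j => E i j), (v i j)⁺ * x i
      - ∑ i, ∑ j ∈ univ.filter (fun j => E i j), (v i j)⁻ * x i = 0 := by
    simp only [← sum_sub_distrib, ← sub_mul, posPart_sub_negPart, ← sum_mul, hdiv, zero_mul,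
      sum_const_zero]
  simp only [mul_sub, sum_sub_distrib, hout]
  linarith

end Graph

theorem stmt_13_general {I : Type*} [Fintype I]
    (E : I → I → Prop) [DecidableRel E]
    (hEsymm : ∀ i j, E i j → E j i)
    (v : I → I → ℝ) (hanti : ∀ i j, v i j = -(v j i))
    (hdiv : ∀ i, ∑ j ∈ Finset.univ.filter (fun j => E i j), v i j = 0)
    (f : ℝ → ℝ) (Lf : ℝ) (hLf : 0 < Lf) (hmono : Monotone f)
    (hlip : ∀ x y : ℝ, |f x - f y| ≤ Lf * |x - y|)
    (w : I → ℝ) :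
    (∑ i, ∑ j ∈ Finset.univ.filter (fun j => E i j),
        (-(min (v i j) 0)) * (f (w i) - f (w j)) * w i)
      ≥ (1 / (2 * Lf)) * ∑ i, ∑ j ∈ Finset.univ.filter (fun j => E i j),
          (-(min (v i j) 0)) * (f (w i) - f (w j)) ^ 2 ∧
    0 ≤ (1 / (2 * Lf)) * ∑ i, ∑ j ∈ Finset.univ.filter (fun j => E i j),
          (-(min (v i j) 0)) * (f (w i) - f (w j)) ^ 2 := by
  have hlip' : ∀ x y, x ≤ y → f y - f x ≤ Lf * (y - x) := fun x y hxy => by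
    simpa [abs_of_nonneg (sub_nonneg.2 hxy)] using (le_abs_self _).trans (hlip y x)
  simp only [← negPart_eq_neg_inf_zero]
  have hedge : ∀ i j, (v i j)⁻ * (potential f (w i) - potential f (w j))
      + 1 / (2 * Lf) * ((v i j)⁻ * (f (w i) - f (w j)) ^ 2)
      ≤ (v i j)⁻ * (f (w i) - f (w j)) * w i := fun i j =>
    calc _ = (v i j)⁻ * (potential f (w i) - potential f (w j)
              + (f (w i) - f (w j)) ^ 2 / (2 * Lf)) := by ring
      _ ≤ (v i j)⁻ * ((f (w i) - f (w j)) * w i) := mul_le_mul_of_nonneg_left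
          (potential_sub_add_sq_div_le hLf hmono hlip' (w j) (w i)) (negPart_nonneg _)
      _ = _ := by ring
  refine ⟨?_, mul_nonneg (by positivity) (sum_nonneg fun i _ => sum_nonneg fun j _ =>
    mul_nonneg (negPart_nonneg _) (sq_nonneg _))⟩
  calc _ = ∑ i, ∑ j ∈ univ.filter (fun j => E i j),
          ((v i j)⁻ * (potential f (w i) - potential f (w j))
            + 1 / (2 * Lf) * ((v i j)⁻ * (f (w i) - f (w j)) ^ 2)) := by
        simp only [sum_add_distrib, ← mul_sum,
          sum_negPart_mul_sub_eq_zero hEsymm hanti hdiv (fun i => potential f (w i)), zero_add]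
    _ ≤ _ := sum_le_sum fun i _ => sum_le_sum fun j _ => hedge i j

theorem stmt_13 {I : Type*} [Fintype I] [DecidableEq I]
    (E : I → I → Prop) [DecidableRel E]
    (hEsymm : ∀ i j, E i j → E j i) (hEirr : ∀ i, ¬ E i i)
    (v : I → I → ℝ) (hanti : ∀ i j, v i j = -(v j i))
    (hdiv : ∀ i, ∑ j ∈ Finset.univ.filter (fun j => E i j), v i j = 0)
    (f : ℝ → ℝ) (Lf : ℝ) (hLf : 0 < Lf) (hmono : Monotone f)
    (hlip : ∀ x y : ℝ, |f x - f y| ≤ Lf * |x - y|)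
    (w : I → ℝ) :
    (∑ i, ∑ j ∈ Finset.univ.filter (fun j => E i j),
        (-(min (v i j) 0)) * (f (w i) - f (w j)) * w i)
      ≥ (1 / (2 * Lf)) * ∑ i, ∑ j ∈ Finset.univ.filter (fun j => E i j),
          (-(min (v i j) 0)) * (f (w i) - f (w j)) ^ 2 ∧
    0 ≤ (1 / (2 * Lf)) * ∑ i, ∑ j ∈ Finset.univ.filter (fun j => E i j),
          (-(min (v i j) 0)) * (f (w i) - f (w j)) ^ 2 :=
  stmt_13_general E hEsymm v hanti hdiv f Lf hLf hmono hlip w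
end
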